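/- Let n ≥ 11 be an odd integer and let μ ∈ (0, 1) and ω > 0 be real. Then every complex root λ of Q_j satisfies Re λ = 0 for all j ∈ {0, 1, …, n−1} if and only if 4/(n−1)² ≤ μ ≤ 16/((n−1)(n−7)). That is, the regular n-gon relative equilibrium with central mass is linearly stable if and only if μ ∈ [4/(n−1)², 16/((n−1)(n−7))]. -/

import Mathlib

open Real Finset

/-- `F_j = ω²·(12 − μ(n−1)(n−5) + μ(n² − 6nj + 6j² − 1)) / (6(2 + μ(n−1)))`. -/
noncomputable def Fcoef (n j : ℕ) (μ ω : ℝ) : ℝ :=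
  ω ^ 2 * (12 - μ * ((n : ℝ) - 1) * ((n : ℝ) - 5)
      + μ * ((n : ℝ) ^ 2 - 6 * n * j + 6 * (j : ℝ) ^ 2 - 1))
    / (6 * (2 + μ * ((n : ℝ) - 1)))

/-- `ε_j = 2μnω²/(2 + μ(n−1))` if `j = 1`, else `0`. -/
noncomputable def eps (n j : ℕ) (μ ω : ℝ) : ℝ :=
  if j = 1 then 2 * μ * n * ω ^ 2 / (2 + μ * ((n : ℝ) - 1)) else 0

/-- `ε'_j = 2μnω²/(2 + μ(n−1))` if `j = n−1`, else `0`. -/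
noncomputable def eps' (n j : ℕ) (μ ω : ℝ) : ℝ :=
  if j = n - 1 then 2 * μ * n * ω ^ 2 / (2 + μ * ((n : ℝ) - 1)) else 0

/-- The stability quartic `Q_j(λ) = λ⁴ + 2ω²λ² + ω⁴ − (F_j + ε_j)(F_j + ε'_j)`. -/
noncomputable def Q (n j : ℕ) (μ ω : ℝ) (lam : ℂ) : ℂ :=
  lam ^ 4 + 2 * (ω : ℂ) ^ 2 * lam ^ 2 + (ω : ℂ) ^ 4
    - ((Fcoef n j μ ω + eps n j μ ω : ℝ) : ℂ)
      * ((Fcoef n j μ ω + eps' n j μ ω : ℝ) : ℂ)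

lemma re_eq_zero_of_sq (r : ℝ) (hr : r ≤ 0) (lam : ℂ) (h : lam ^ 2 = (r : ℂ)) :
    lam.re = 0 := by
  have h1 : lam.re * lam.re - lam.im * lam.im = r := by
    have := congrArg Complex.re h
    simpa [pow_two, Complex.mul_re] using this
  have h2 : lam.re * lam.im + lam.im * lam.re = 0 := by
    have := congrArg Complex.im h
    simpa [pow_two, Complex.mul_im] using this
  have h3 : lam.re * lam.im = 0 := by linarith
  rcases mul_eq_zero.mp h3 with h4 | h4
  · exact h4
  · nlinarith [sq_nonneg lam.re]

lemma quartic_iff (ω P : ℝ) (hω : 0 < ω) :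
    (∀ lam : ℂ, lam ^ 4 + 2 * (ω:ℂ) ^ 2 * lam ^ 2 + (ω:ℂ) ^ 4 - (P:ℂ) = 0 → lam.re = 0)
      ↔ 0 ≤ P ∧ P ≤ ω ^ 4 := by
  constructor
  · intro H
    constructor
    · by_contra hP
      push_neg at hP
      set s := Real.sqrt (-P) with hs
      have hs0 : 0 < s := Real.sqrt_pos.mpr (by linarith)
      obtain ⟨lam, hlam⟩ := IsAlgClosed.exists_pow_nat_eq
        (-(ω:ℂ)^2 + Complex.I * (s:ℂ)) (n := 2) (by norm_num)
      have hsq : ((s:ℂ))^2 = (-P : ℂ) := by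
        norm_cast
        rw [hs, Real.sq_sqrt (by linarith)]
      have h3 : (Complex.I * (s:ℂ))^2 = (P:ℂ) := by
        rw [mul_pow, Complex.I_sq, hsq]; ring
      have hroot : lam ^ 4 + 2 * (ω:ℂ) ^ 2 * lam ^ 2 + (ω:ℂ) ^ 4 - (P:ℂ) = 0 := by
        linear_combination (lam^2 + (ω:ℂ)^2 + Complex.I * (s:ℂ)) * hlam + h3
      have hre := H lam hroot
      have him : (lam ^ 2).im = s := by
        rw [hlam]
        simp [pow_two, Complex.mul_im, Complex.mul_re]
      rw [pow_two] at him
      simp [Complex.mul_im, hre] at him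
      linarith
    · by_contra hP
      push_neg at hP
      have hP0 : 0 ≤ P := le_of_lt (lt_trans (by positivity) hP)
      have hlt : ω ^ 2 < Real.sqrt P := by
        have h4 : ω ^ 2 = Real.sqrt (ω ^ 4) := by
          rw [show ω^4 = (ω^2)^2 by ring, Real.sqrt_sq (by positivity)]
        rw [h4]
        exact Real.sqrt_lt_sqrt (by positivity) hP
      set t := Real.sqrt (Real.sqrt P - ω ^ 2) with ht
      have ht0 : 0 < t := Real.sqrt_pos.mpr (by linarith)
      have ht2 : (t:ℝ)^2 = Real.sqrt P - ω^2 := Real.sq_sqrt (by linarith)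
      have hroot : (t:ℂ) ^ 4 + 2 * (ω:ℂ) ^ 2 * (t:ℂ) ^ 2 + (ω:ℂ) ^ 4 - (P:ℂ) = 0 := by
        have h1 := congrArg (Complex.ofReal) ht2
        push_cast at h1
        have h2 : ((Real.sqrt P : ℝ):ℂ)^2 = (P:ℂ) := by
          norm_cast
          exact Real.sq_sqrt hP0
        linear_combination ((t:ℂ)^2 + (ω:ℂ)^2 + ((Real.sqrt P : ℝ):ℂ)) * h1 + h2
      have := H _ hroot
      simp at this
      linarith
  · rintro ⟨h0, h1⟩ lam hroot
    set s := Real.sqrt P with hs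
    have hsle : s ≤ ω ^ 2 := by
      have h5 : Real.sqrt P ≤ Real.sqrt (ω^4) := Real.sqrt_le_sqrt h1
      rwa [show ω^4 = (ω^2)^2 by ring, Real.sqrt_sq (by positivity)] at h5
    have hs2 : ((s:ℝ):ℂ)^2 = (P:ℂ) := by norm_cast; exact Real.sq_sqrt h0
    have hw : (lam ^ 2 + (ω:ℂ)^2 - (s:ℂ)) * (lam ^ 2 + (ω:ℂ)^2 + (s:ℂ)) = 0 := by
      linear_combination hroot - hs2
    rcases mul_eq_zero.mp hw with h | h
    · refine re_eq_zero_of_sq (s - ω^2) (by linarith) lam ?_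
      push_cast
      linear_combination h
    · refine re_eq_zero_of_sq (-s - ω^2) (by nlinarith [Real.sqrt_nonneg P]) lam ?_
      push_cast
      linear_combination h

lemma Fcoef_eq (n j : ℕ) (μ ω : ℝ) (hD : 2 + μ * ((n:ℝ)-1) ≠ 0) :
    Fcoef n j μ ω = ω^2 * (2 - μ * (((j:ℝ))-1) * (((n:ℝ))-1-((j:ℝ)))) / (2 + μ*(((n:ℝ))-1)) := by
  unfold Fcoef
  field_simp
  ring
set_option maxHeartbeats 800000 in
/-- For odd `n ≥ 11`: the regular `n`-gon with central mass is linearly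
stable iff `4/(n−1)² ≤ μ ≤ 16/((n−1)(n−7))`. -/
theorem ngon_stable_iff_odd (n : ℕ) (hn : 11 ≤ n) (hno : Odd n)
    (μ ω : ℝ) (hμ : μ ∈ Set.Ioo (0 : ℝ) 1) (hω : 0 < ω) :
    (∀ j < n, ∀ lam : ℂ, Q n j μ ω lam = 0 → lam.re = 0)
      ↔ 4 / ((n : ℝ) - 1) ^ 2 ≤ μ
        ∧ μ ≤ 16 / (((n : ℝ) - 1) * ((n : ℝ) - 7)) := by
  obtain ⟨hμ0, hμ1⟩ := hμ
  obtain ⟨k, hk⟩ := hno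
  have hk5 : 5 ≤ k := by omega
  have hn11 : (11:ℝ) ≤ (n:ℝ) := by exact_mod_cast hn
  have hD : 0 < 2 + μ * ((n:ℝ) - 1) := by nlinarith
  have hDne : (2 + μ*((n:ℝ)-1)) ≠ 0 := ne_of_gt hD
  have hω2 : (0:ℝ) < ω^2 := by positivity
  have hkey : ∀ j, (∀ lam : ℂ, Q n j μ ω lam = 0 → lam.re = 0) ↔
      0 ≤ (Fcoef n j μ ω + eps n j μ ω) * (Fcoef n j μ ω + eps' n j μ ω) ∧
      (Fcoef n j μ ω + eps n j μ ω) * (Fcoef n j μ ω + eps' n j μ ω) ≤ ω^4 := by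
    intro j
    have hq := quartic_iff ω ((Fcoef n j μ ω + eps n j μ ω) * (Fcoef n j μ ω + eps' n j μ ω)) hω
    have e : ∀ lam : ℂ, Q n j μ ω lam
        = lam ^ 4 + 2 * (ω:ℂ) ^ 2 * lam ^ 2 + (ω:ℂ) ^ 4
          - (((Fcoef n j μ ω + eps n j μ ω) * (Fcoef n j μ ω + eps' n j μ ω) : ℝ) : ℂ) := by
      intro lam
      rw [Q]
      push_cast
      ring
    simp only [e]
    exact hq
  constructor
  · intro H
    constructor
    · -- lower bound from j = 1
      have h1 := ((hkey 1).mp (H 1 (by omega))).2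
      have he : eps n 1 μ ω = 2*μ*(n:ℝ)*ω^2/(2+μ*((n:ℝ)-1)) := if_pos rfl
      have he' : eps' n 1 μ ω = 0 := if_neg (by omega)
      have hF : Fcoef n 1 μ ω = ω^2*2/(2+μ*((n:ℝ)-1)) := by
        rw [Fcoef_eq n 1 μ ω hDne]; norm_num
      rw [hF, he, he'] at h1
      have hE : (ω^2*2/(2+μ*((n:ℝ)-1)) + 2*μ*(n:ℝ)*ω^2/(2+μ*((n:ℝ)-1)))
            * (ω^2*2/(2+μ*((n:ℝ)-1)) + 0)
          = ω^4 * ((4 + 4*μ*(n:ℝ)) / (2+μ*((n:ℝ)-1))^2) := by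
        field_simp
        ring
      rw [hE] at h1
      have hX : (4 + 4*μ*(n:ℝ)) / (2+μ*((n:ℝ)-1))^2 ≤ 1 := by
        have := (mul_le_mul_iff_right₀ (by positivity : (0:ℝ) < ω^4)).mp (by linarith [h1] : ω^4 * ((4 + 4*μ*(n:ℝ)) / (2+μ*((n:ℝ)-1))^2) ≤ ω^4 * 1)
        exact this
      have hX2 : 4 + 4*μ*(n:ℝ) ≤ (2+μ*((n:ℝ)-1))^2 := by
        have := (div_le_one (by positivity : (0:ℝ) < (2+μ*((n:ℝ)-1))^2)).mp hX
        linarith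
      rw [div_le_iff₀ (by nlinarith : (0:ℝ) < ((n:ℝ)-1)^2)]
      nlinarith [hX2, hμ0, sq_nonneg (μ*((n:ℝ)-1))]
    · -- upper bound from j = k+1
      have hjn : k + 1 < n := by omega
      have h1 := ((hkey (k+1)).mp (H (k+1) hjn)).2
      have he : eps n (k+1) μ ω = 0 := if_neg (by omega)
      have he' : eps' n (k+1) μ ω = 0 := if_neg (by omega)
      have hnr : (n:ℝ) = 2*(k:ℝ)+1 := by rw [hk]; push_cast; ring
      have hkr : (5:ℝ) ≤ (k:ℝ) := by exact_mod_cast hk5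
      have hF : Fcoef n (k+1) μ ω
          = ω^2*(2 - μ*((k:ℝ)*((k:ℝ)-1)))/(2+μ*((n:ℝ)-1)) := by
        rw [Fcoef_eq n (k+1) μ ω hDne]
        push_cast
        rw [hnr]
        ring_nf
      rw [hF, he, he'] at h1
      have hE : (ω^2*(2 - μ*((k:ℝ)*((k:ℝ)-1)))/(2+μ*((n:ℝ)-1)) + 0)
            * (ω^2*(2 - μ*((k:ℝ)*((k:ℝ)-1)))/(2+μ*((n:ℝ)-1)) + 0)
          = ω^4 * ((2 - μ*((k:ℝ)*((k:ℝ)-1)))^2 / (2+μ*((n:ℝ)-1))^2) := by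
        field_simp
        ring
      rw [hE] at h1
      have hX : (2 - μ*((k:ℝ)*((k:ℝ)-1)))^2 / (2+μ*((n:ℝ)-1))^2 ≤ 1 := by
        exact (mul_le_mul_iff_right₀ (by positivity : (0:ℝ) < ω^4)).mp (by linarith [h1])
      have hsq : (2 - μ*((k:ℝ)*((k:ℝ)-1)))^2 ≤ (2+μ*((n:ℝ)-1))^2 := by
        have := (div_le_one (by positivity : (0:ℝ) < (2+μ*((n:ℝ)-1))^2)).mp hX
        linarith
      have hx : -(2+μ*((n:ℝ)-1)) ≤ 2 - μ*((k:ℝ)*((k:ℝ)-1)) := by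
        nlinarith [hsq, sq_nonneg (2 - μ*((k:ℝ)*((k:ℝ)-1)) + (2+μ*((n:ℝ)-1))), hD]
      have hx' : μ*((k:ℝ)*((k:ℝ)-1)) ≤ 4 + μ*(2*(k:ℝ)) := by
        rw [hnr] at hx; linarith
      rw [le_div_iff₀ (by nlinarith : (0:ℝ) < ((n:ℝ)-1)*((n:ℝ)-7)), hnr]
      nlinarith [hx', hμ0]
  · rintro ⟨hlb, hub⟩ j hj
    rw [hkey j]
    have hlb' : 4 ≤ μ*((n:ℝ)-1)^2 := by
      rw [div_le_iff₀ (by nlinarith : (0:ℝ) < ((n:ℝ)-1)^2)] at hlb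
      linarith
    have hub' : μ*(((n:ℝ)-1)*((n:ℝ)-7)) ≤ 16 := by
      rw [le_div_iff₀ (by nlinarith : (0:ℝ) < ((n:ℝ)-1)*((n:ℝ)-7))] at hub
      linarith
    by_cases hj1 : j = 1
    · subst hj1
      have he : eps n 1 μ ω = 2*μ*(n:ℝ)*ω^2/(2+μ*((n:ℝ)-1)) := if_pos rfl
      have he' : eps' n 1 μ ω = 0 := if_neg (by omega)
      have hF : Fcoef n 1 μ ω = ω^2*2/(2+μ*((n:ℝ)-1)) := by
        rw [Fcoef_eq n 1 μ ω hDne]; norm_num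
      rw [hF, he, he']
      have hE : (ω^2*2/(2+μ*((n:ℝ)-1)) + 2*μ*(n:ℝ)*ω^2/(2+μ*((n:ℝ)-1)))
            * (ω^2*2/(2+μ*((n:ℝ)-1)) + 0)
          = ω^4 * ((4 + 4*μ*(n:ℝ)) / (2+μ*((n:ℝ)-1))^2) := by
        field_simp
        ring
      rw [hE]
      constructor
      · positivity
      · nth_rewrite 2 [show ω^4 = ω^4 * 1 by ring]
        apply mul_le_mul_of_nonneg_left _ (by positivity)
        rw [div_le_one (by positivity)]
        nlinarith [mul_le_mul_of_nonneg_left hlb' hμ0.le]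
    · by_cases hjn : j = n - 1
      · subst hjn
        have he : eps n (n-1) μ ω = 0 := if_neg (by omega)
        have he' : eps' n (n-1) μ ω = 2*μ*(n:ℝ)*ω^2/(2+μ*((n:ℝ)-1)) := if_pos rfl
        have hc : ((n-1 : ℕ):ℝ) = (n:ℝ) - 1 := by
          rw [Nat.cast_sub (by omega)]; norm_num
        have hF : Fcoef n (n-1) μ ω = ω^2*2/(2+μ*((n:ℝ)-1)) := by
          rw [Fcoef_eq n (n-1) μ ω hDne, hc]
          ring_nf
        rw [hF, he, he']
        have hE : (ω^2*2/(2+μ*((n:ℝ)-1)) + 0)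
              * (ω^2*2/(2+μ*((n:ℝ)-1)) + 2*μ*(n:ℝ)*ω^2/(2+μ*((n:ℝ)-1)))
            = ω^4 * ((4 + 4*μ*(n:ℝ)) / (2+μ*((n:ℝ)-1))^2) := by
          field_simp
          ring
        rw [hE]
        constructor
        · positivity
        · nth_rewrite 2 [show ω^4 = ω^4 * 1 by ring]
          apply mul_le_mul_of_nonneg_left _ (by positivity)
          rw [div_le_one (by positivity)]
          nlinarith [mul_le_mul_of_nonneg_left hlb' hμ0.le]
      · -- generic j
        have he : eps n j μ ω = 0 := if_neg hj1
        have he' : eps' n j μ ω = 0 := if_neg hjn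
        have hF : Fcoef n j μ ω
            = ω^2*(2 - μ*(((j:ℝ)-1)*((n:ℝ)-1-(j:ℝ))))/(2+μ*((n:ℝ)-1)) := by
          rw [Fcoef_eq n j μ ω hDne]; ring_nf
        rw [hF, he, he']
        have hjle : (j:ℝ) ≤ (n:ℝ) - 1 := by
          have : (j:ℝ) + 1 ≤ (n:ℝ) := by exact_mod_cast hj
          linarith
        have hclb : -((n:ℝ)-1) ≤ ((j:ℝ)-1)*((n:ℝ)-1-(j:ℝ)) := by
          rcases Nat.eq_zero_or_pos j with h0 | h0
          · subst h0
            push_cast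
            nlinarith
          · have h1 : (1:ℝ) ≤ (j:ℝ) := by exact_mod_cast h0
            nlinarith [mul_nonneg (by linarith : (0:ℝ) ≤ (j:ℝ)-1) (by linarith : (0:ℝ) ≤ (n:ℝ)-1-(j:ℝ))]
        have hz : ((n:ℤ) - 2*(j:ℤ)) ≠ 0 := by omega
        have hz2 : (1:ℤ) ≤ ((n:ℤ) - 2*(j:ℤ))^2 := by
          rcases lt_or_gt_of_ne hz with h | h <;> nlinarith
        have hz2' : (1:ℝ) ≤ ((n:ℝ) - 2*(j:ℝ))^2 := by exact_mod_cast hz2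
        have hcub : ((j:ℝ)-1)*((n:ℝ)-1-(j:ℝ)) ≤ ((n:ℝ)-1)*((n:ℝ)-3)/4 := by
          nlinarith [hz2']
        have ha2 : 0 ≤ (2+μ*((n:ℝ)-1)) - (2 - μ*(((j:ℝ)-1)*((n:ℝ)-1-(j:ℝ)))) := by
          nlinarith [mul_le_mul_of_nonneg_left hclb hμ0.le]
        have hb2 : 0 ≤ (2+μ*((n:ℝ)-1)) + (2 - μ*(((j:ℝ)-1)*((n:ℝ)-1-(j:ℝ)))) := by
          nlinarith [mul_le_mul_of_nonneg_left hcub hμ0.le, hub']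
        have hsq : (2 - μ*(((j:ℝ)-1)*((n:ℝ)-1-(j:ℝ))))^2 ≤ (2+μ*((n:ℝ)-1))^2 := by
          nlinarith [mul_nonneg ha2 hb2]
        have hE : (ω^2*(2 - μ*(((j:ℝ)-1)*((n:ℝ)-1-(j:ℝ))))/(2+μ*((n:ℝ)-1)) + 0)
              * (ω^2*(2 - μ*(((j:ℝ)-1)*((n:ℝ)-1-(j:ℝ))))/(2+μ*((n:ℝ)-1)) + 0)
            = ω^4 * ((2 - μ*(((j:ℝ)-1)*((n:ℝ)-1-(j:ℝ))))^2 / (2+μ*((n:ℝ)-1))^2) := by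
          field_simp
          ring
        rw [hE]
        constructor
        · positivity
        · nth_rewrite 2 [show ω^4 = ω^4 * 1 by ring]
          apply mul_le_mul_of_nonneg_left _ (by positivity)
          rw [div_le_one (by positivity)]
          exact hsq
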